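/- If μ₀ is a polynomially small perturbation of μ₁, i.e. μ₀ = μ₁ + μ₂ (μ₂ ≠ 0) and ‖p_n(μ₁,·)‖_{L²(μ₂)} → 0 as n → ∞, then the ratio of leading coefficients satisfies γ_n(μ₁)/γ_n(μ₀) → 1 as n → ∞. -/

import Mathlib

/-!
Expanding `p₁ₙ` in the `μ₀`-orthonormal basis, its coefficient on `p₀ₙ` is `γₙ(μ₁)/γₙ(μ₀)`,
so by Parseval `(γₙ(μ₁)/γₙ(μ₀))² ≤ ‖p₁ₙ‖²_{μ₀} = 1 + ‖p₁ₙ‖²_{μ₂}`. Symmetrically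
`(γₙ(μ₀)/γₙ(μ₁))² ≤ ‖p₀ₙ‖²_{μ₁} ≤ ‖p₀ₙ‖²_{μ₀} = 1`, so `r = γₙ(μ₁)/γₙ(μ₀)` satisfies
`1 ≤ r ≤ r² ≤ 1 + ‖p₁ₙ‖²_{μ₂}`, and the PS condition squeezes `r` to `1`.
-/

open MeasureTheory Polynomial Filter

noncomputable section

/-- The (closed) support of a Borel measure on `ℂ`. -/
def msupp (μ : Measure ℂ) : Set ℂ := {z | ∀ U ∈ nhds z, μ U ≠ 0}

/-- `p` is the sequence of orthonormal polynomials for `μ`: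
`p n` has degree `n`, positive (real) leading coefficient, and
`⟪p m, p n⟫_μ = δ_{m n}`. -/
def ONP (μ : Measure ℂ) (p : ℕ → Polynomial ℂ) : Prop :=
  (∀ n, (p n).natDegree = n) ∧
  (∀ n, 0 < ((p n).leadingCoeff).re ∧ ((p n).leadingCoeff).im = 0) ∧
  (∀ m n, ∫ z, (p m).eval z * (starRingEnd ℂ) ((p n).eval z) ∂μ
      = if m = n then 1 else 0)

/-- The `n`-th Christoffel function of the measure `μ` at the point `z`. -/
def christoffel (μ : Measure ℂ) (n : ℕ) (z : ℂ) : ℝ :=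
  sInf {r : ℝ | ∃ P : Polynomial ℂ, P.natDegree ≤ n ∧ P.eval z = 1 ∧
      r = ∫ t, ‖P.eval t‖ ^ 2 ∂μ}

open Finset

namespace Polynomial

variable {K : Type*} [Field K] {p : ℕ → K[X]}

theorem exists_eq_sum_smul_of_natDegree_le (hdeg : ∀ k, (p k).natDegree = k)
    (hne : ∀ k, p k ≠ 0) {q : K[X]} {n : ℕ} (hq : q.natDegree ≤ n) :
    ∃ c : ℕ → K, q = ∑ k ∈ range (n + 1), c k • p k := by
  let S : Sequence K := ⟨p, fun k => by rw [degree_eq_natDegree (hne k), hdeg k]⟩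
  have hspan : q ∈ Submodule.span K (p '' Set.Iio (n + 1)) := by
    rw [S.span_degreeLT fun k _ => (leadingCoeff_ne_zero.2 (hne k)).isUnit, mem_degreeLT]
    exact (degree_le_natDegree.trans (WithBot.coe_le_coe.2 hq)).trans_lt
      (WithBot.coe_lt_coe.2 n.lt_succ_self)
  obtain ⟨c, hc, rfl⟩ := (Finsupp.mem_span_image_iff_linearCombination K).1 hspan
  refine ⟨c, Finsupp.sum_of_support_subset c ?_ _ fun _ _ => zero_smul K _⟩
  intro k hk
  simpa using (Finsupp.mem_supported K c).1 hc hk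

theorem coeff_sum_smul_of_natDegree_eq {R : Type*} [Semiring R] {p : ℕ → R[X]}
    (hdeg : ∀ k, (p k).natDegree = k) (c : ℕ → R) (n : ℕ) :
    (∑ k ∈ range (n + 1), c k • p k).coeff n = c n * (p n).coeff n := by
  have hlower : ∑ k ∈ range n, (c k • p k).coeff n = 0 := sum_eq_zero fun k hk => by
    rw [coeff_smul, coeff_eq_zero_of_natDegree_lt (by rw [hdeg]; exact mem_range.1 hk), smul_zero]
  rw [finsetSum_coeff, sum_range_succ, hlower, zero_add, coeff_smul, smul_eq_mul]

end Polynomial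

namespace ONP

variable {μ : Measure ℂ} {p : ℕ → ℂ[X]}

theorem coeff_self (hp : ONP μ p) (n : ℕ) : (p n).coeff n = ((p n).leadingCoeff.re : ℂ) := by
  rw [show (p n).coeff n = (p n).leadingCoeff by rw [leadingCoeff, hp.1 n]]
  exact Complex.ext rfl (by simp [(hp.2.1 n).2])

theorem ne_zero (hp : ONP μ p) (n : ℕ) : p n ≠ 0 :=
  leadingCoeff_ne_zero.1 fun h => by simpa [h] using (hp.2.1 n).1

theorem memLp (hp : ONP μ p) (n : ℕ) : MemLp (fun z => (p n).eval z) 2 μ := by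
  -- a non-integrable integrand would have integral `0`, not `1`
  have hint : Integrable (fun z => (p n).eval z * starRingEnd ℂ ((p n).eval z)) μ :=
    Integrable.of_integral_ne_zero (by simp [hp.2.2])
  refine (memLp_two_iff_integrable_sq_norm (p n).continuous.aestronglyMeasurable).2 ?_
  simpa only [Complex.mul_conj, RCLike.re_to_complex, Complex.ofReal_re,
    Complex.normSq_eq_norm_sq] using hint.re

theorem memLp_eval (hp : ONP μ p) (q : ℂ[X]) : MemLp (fun z => q.eval z) 2 μ := by
  obtain ⟨c, hc⟩ := exists_eq_sum_smul_of_natDegree_le hp.1 hp.ne_zero le_rfl (q := q)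
  rw [hc]
  simp only [eval_finsetSum, eval_smul, smul_eq_mul]
  exact memLp_finsetSum _ fun k _ => (hp.memLp k).const_mul (c k)

theorem integral_norm_sq_sum (hp : ONP μ p) (s : Finset ℕ) (c : ℕ → ℂ) :
    ∫ z, ‖(∑ k ∈ s, c k • p k).eval z‖ ^ 2 ∂μ = ∑ k ∈ s, ‖c k‖ ^ 2 := by
  have hint : ∀ j k, Integrable (fun z => (p j).eval z * starRingEnd ℂ ((p k).eval z)) μ :=
    fun j k => (hp.memLp j).integrable_mul (hp.memLp k).star
  apply Complex.ofReal_injective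
  calc ((∫ z, ‖(∑ k ∈ s, c k • p k).eval z‖ ^ 2 ∂μ : ℝ) : ℂ)
      = ∫ z, ∑ j ∈ s, ∑ k ∈ s,
          c j * starRingEnd ℂ (c k) * ((p j).eval z * starRingEnd ℂ ((p k).eval z)) ∂μ := by
        rw [← integral_complex_ofReal]
        refine integral_congr_ae (Eventually.of_forall fun z => ?_)
        simp only [Complex.ofReal_pow, ← Complex.mul_conj', eval_finsetSum, eval_smul,
          smul_eq_mul, map_sum, sum_mul_sum, map_mul]
        exact sum_congr rfl fun j _ => sum_congr rfl fun k _ => by ring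
    _ = ∑ j ∈ s, ∑ k ∈ s, c j * starRingEnd ℂ (c k) * if j = k then 1 else 0 := by
        rw [integral_finsetSum _ fun j _ => integrable_finsetSum _ fun k _ =>
          (hint j k).const_mul _]
        refine sum_congr rfl fun j _ => ?_
        rw [integral_finsetSum _ fun k _ => (hint j k).const_mul _]
        simp only [integral_const_mul, hp.2.2]
    _ = ((∑ k ∈ s, ‖c k‖ ^ 2 : ℝ) : ℂ) := by
        simp [Complex.mul_conj']

theorem norm_coeff_div_sq_le_integral (hp : ONP μ p) {q : ℂ[X]} {n : ℕ} (hq : q.natDegree ≤ n) :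
    ‖q.coeff n / (p n).coeff n‖ ^ 2 ≤ ∫ z, ‖q.eval z‖ ^ 2 ∂μ := by
  obtain ⟨c, rfl⟩ := exists_eq_sum_smul_of_natDegree_le hp.1 hp.ne_zero hq
  have hlead : (p n).coeff n ≠ 0 := by
    rw [hp.coeff_self]
    exact_mod_cast (hp.2.1 n).1.ne'
  rw [coeff_sum_smul_of_natDegree_eq hp.1, mul_div_cancel_right₀ _ hlead,
    hp.integral_norm_sq_sum]
  exact single_le_sum (fun k _ => sq_nonneg ‖c k‖) (self_mem_range_succ n)

theorem integral_norm_sq_self (hp : ONP μ p) (n : ℕ) : ∫ z, ‖(p n).eval z‖ ^ 2 ∂μ = 1 := by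
  simpa using hp.integral_norm_sq_sum {n} 1

theorem sq_leadingCoeff_div_le_integral {ν : Measure ℂ} {q : ℕ → ℂ[X]} (hp : ONP μ p) (hq : ONP ν q)
    (n : ℕ) :
    ((q n).leadingCoeff.re / (p n).leadingCoeff.re) ^ 2 ≤ ∫ z, ‖(q n).eval z‖ ^ 2 ∂μ := by
  have hratio := hp.norm_coeff_div_sq_le_integral (hq.1 n).le
  rwa [hp.coeff_self, hq.coeff_self, ← Complex.ofReal_div,
    Complex.norm_of_nonneg (div_pos (hq.2.1 n).1 (hp.2.1 n).1).le] at hratio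

end ONP

theorem stmt_10_general (μ0 μ1 μ2 : Measure ℂ)
    (hsum : μ0 = μ1 + μ2)
    (p0 p1 : ℕ → Polynomial ℂ) (hp0 : ONP μ0 p0) (hp1 : ONP μ1 p1)
    (hPS : Tendsto (fun n => ∫ z, ‖(p1 n).eval z‖ ^ 2 ∂μ2) atTop (nhds 0)) :
    Tendsto (fun n => ((p1 n).leadingCoeff).re / ((p0 n).leadingCoeff).re)
      atTop (nhds 1) := by
  set r := fun n => ((p1 n).leadingCoeff).re / ((p0 n).leadingCoeff).re
  have upper : ∀ n, r n ^ 2 ≤ 1 + ∫ z, ‖(p1 n).eval z‖ ^ 2 ∂μ2 := fun n => by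
    have hint := (hp0.memLp_eval (p1 n)).integrable_norm_pow two_ne_zero
    rw [hsum, integrable_add_measure] at hint
    calc r n ^ 2 ≤ ∫ z, ‖(p1 n).eval z‖ ^ 2 ∂μ0 := hp0.sq_leadingCoeff_div_le_integral hp1 n
      _ = _ := by rw [hsum, integral_add_measure hint.1 hint.2, hp1.integral_norm_sq_self]
  have lower : ∀ n, 1 ≤ r n := fun n => by
    have hle : ((p0 n).leadingCoeff.re / (p1 n).leadingCoeff.re) ^ 2 ≤ 1 :=
      calc _ ≤ ∫ z, ‖(p0 n).eval z‖ ^ 2 ∂μ1 := hp1.sq_leadingCoeff_div_le_integral hp0 n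
        _ ≤ ∫ z, ‖(p0 n).eval z‖ ^ 2 ∂μ0 :=
          integral_mono_measure (hsum ▸ Measure.le_add_right le_rfl)
            (Eventually.of_forall fun z => sq_nonneg _)
            ((hp0.memLp n).integrable_norm_pow two_ne_zero)
        _ = 1 := hp0.integral_norm_sq_self n
    rw [pow_le_one_iff_of_nonneg (div_pos (hp0.2.1 n).1 (hp1.2.1 n).1).le two_ne_zero,
      div_le_one (hp1.2.1 n).1] at hle
    exact (one_le_div (hp0.2.1 n).1).2 hle
  refine tendsto_of_tendsto_of_tendsto_of_le_of_le tendsto_const_nhds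
    (by simpa using tendsto_const_nhds.add hPS) lower fun n => ?_
  exact (le_self_pow₀ (lower n) two_ne_zero).trans (upper n)

/-- If `μ₀` is a PS perturbation of `μ₁`, then `γ_n(μ₁)/γ_n(μ₀) → 1`. -/
theorem stmt_10 (μ0 μ1 μ2 : Measure ℂ) [IsFiniteMeasure μ1] [IsFiniteMeasure μ2]
    (hsum : μ0 = μ1 + μ2) (hμ2 : μ2 ≠ 0)
    (h0c : IsCompact (msupp μ0)) (h0i : (msupp μ0).Infinite)
    (h1c : IsCompact (msupp μ1)) (h1i : (msupp μ1).Infinite)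
    (p0 p1 : ℕ → Polynomial ℂ) (hp0 : ONP μ0 p0) (hp1 : ONP μ1 p1)
    (hPS : Tendsto (fun n => ∫ z, ‖(p1 n).eval z‖ ^ 2 ∂μ2) atTop (nhds 0)) :
    Tendsto (fun n => ((p1 n).leadingCoeff).re / ((p0 n).leadingCoeff).re)
      atTop (nhds 1) :=
  stmt_10_general μ0 μ1 μ2 hsum p0 p1 hp0 hp1 hPS
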